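/- arXiv:2203.00872 — 2 statements merged into one kernel-verified Lean document; each statement's English description precedes it below -/
import Mathlib

section
/- (Correctness of Algorithm 1.) Let T : ℕ with T ≥ 1, let θ : Fin n → Fin n → ℝ be any weight function, let A : Fin T → (Fin n → Fin n → ℝ) be a family of binary matrices, and let Ā = (1/T) • ∑_{t} A t be the sample centroid. Then for all indices s, s' : Fin T: ∑_{t : Fin T} d_θ(A s, A t) ≤ ∑_{t : Fin T} d_θ(A s', A t) if and only if dsq_θ(A s, Ā) ≤ dsq_θ(A s', Ā). In particular, a map in the sample is a sample medoid (minimizes the sum of d_θ distances to the sample) if and only if it minimizes the dsq_θ distance to the sample centroid. -/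
/-! On entries in `{0, 1}` we have `|a - b| = (a - b)²`, so `d_θ` and `dsq_θ` agree on binary
matrices. Huygens' decomposition `∑ₜ dsq_θ(X, Aₜ) = T · dsq_θ(X, Ā) + ∑ₜ dsq_θ(Ā, Aₜ)`, valid for
every `X`, then makes the sum of distances from a sample map to the sample an increasing affine
function of its `dsq_θ` distance to the centroid `Ā`. -/

open Finset

/-- The weighted distance d_θ over matrices. -/
noncomputable def dTheta {n : ℕ} (θ A₁ A₂ : Fin n → Fin n → ℝ) : ℝ :=
  (1 / 2) * ∑ i : Fin n, ∑ j : Fin n, θ i j * |A₁ i j - A₂ i j|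

/-- The squared version dsq_θ of the weighted distance. -/
noncomputable def dsqTheta {n : ℕ} (θ A₁ A₂ : Fin n → Fin n → ℝ) : ℝ :=
  (1 / 2) * ∑ i : Fin n, ∑ j : Fin n, θ i j * (A₁ i j - A₂ i j) ^ 2

/-- A matrix is binary if all its entries are 0 or 1. -/
def IsBinary {n : ℕ} (A : Fin n → Fin n → ℝ) : Prop :=
  ∀ i j, A i j ∈ ({0, 1} : Set ℝ)

lemma abs_sub_eq_sq_of_mem_zero_one {a b : ℝ} (ha : a ∈ ({0, 1} : Set ℝ))
    (hb : b ∈ ({0, 1} : Set ℝ)) : |a - b| = (a - b) ^ 2 := by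
  rcases ha with rfl | rfl <;> rcases hb with rfl | rfl <;> norm_num

lemma dTheta_eq_dsqTheta_of_isBinary {n : ℕ} (θ : Fin n → Fin n → ℝ)
    {A₁ A₂ : Fin n → Fin n → ℝ} (h₁ : IsBinary A₁) (h₂ : IsBinary A₂) :
    dTheta θ A₁ A₂ = dsqTheta θ A₁ A₂ := by
  simp only [dTheta, dsqTheta, abs_sub_eq_sq_of_mem_zero_one (h₁ _ _) (h₂ _ _)]

theorem sum_sq_sub_eq_card_mul_sq_sub_mean_add {ι : Type*} [Fintype ι] (v : ι → ℝ) (x : ℝ) :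
    ∑ i, (x - v i) ^ 2 =
      Fintype.card ι * (x - 1 / Fintype.card ι * ∑ i, v i) ^ 2 +
        ∑ i, (1 / Fintype.card ι * ∑ i, v i - v i) ^ 2 := by
  set m := 1 / (Fintype.card ι : ℝ) * ∑ i, v i
  have hmean : ∑ i, (m - v i) = 0 := by
    rcases isEmpty_or_nonempty ι with hι | hι
    · simp
    · simp only [sum_sub_distrib, sum_const, card_univ, nsmul_eq_mul, m]
      field_simp
      ring
  calc ∑ i, (x - v i) ^ 2
      = ∑ i, ((x - m) ^ 2 + 2 * (x - m) * (m - v i) + (m - v i) ^ 2) :=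
        sum_congr rfl fun _ _ => by ring
    _ = Fintype.card ι * (x - m) ^ 2 + 2 * (x - m) * ∑ i, (m - v i) + ∑ i, (m - v i) ^ 2 := by
        simp only [sum_add_distrib, sum_const, card_univ, nsmul_eq_mul, mul_sum]
    _ = Fintype.card ι * (x - m) ^ 2 + ∑ i, (m - v i) ^ 2 := by rw [hmean]; ring

noncomputable def sampleCentroid {ι : Type*} [Fintype ι] {n : ℕ}
    (A : ι → Fin n → Fin n → ℝ) : Fin n → Fin n → ℝ :=
  (1 / (Fintype.card ι : ℝ)) • ∑ u, A u

lemma sampleCentroid_apply {ι : Type*} [Fintype ι] {n : ℕ} (A : ι → Fin n → Fin n → ℝ)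
    (i j : Fin n) : sampleCentroid A i j = 1 / Fintype.card ι * ∑ u, A u i j := by
  simp [sampleCentroid, Finset.sum_apply]

theorem sum_dsqTheta_eq_card_mul_dsqTheta_sampleCentroid_add {ι : Type*} [Fintype ι] {n : ℕ}
    (θ X : Fin n → Fin n → ℝ) (A : ι → Fin n → Fin n → ℝ) :
    ∑ t, dsqTheta θ X (A t) =
      Fintype.card ι * dsqTheta θ X (sampleCentroid A) +
        ∑ t, dsqTheta θ (sampleCentroid A) (A t) := by
  have entrywise : ∀ i j, ∑ t, θ i j * (X i j - A t i j) ^ 2 =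
      Fintype.card ι * (θ i j * (X i j - sampleCentroid A i j) ^ 2) +
        ∑ t, θ i j * (sampleCentroid A i j - A t i j) ^ 2 := by
    intro i j
    rw [← mul_sum, ← mul_sum, sampleCentroid_apply,
      sum_sq_sub_eq_card_mul_sq_sub_mean_add (fun t => A t i j)]
    ring
  simp only [dsqTheta, ← mul_sum]
  -- bring the sum over the sample innermost, where `entrywise` applies
  rw [sum_comm]
  simp_rw [sum_comm (γ := ι), entrywise, sum_add_distrib, ← mul_sum]
  ring

theorem sum_dTheta_le_iff_dsqTheta_sampleCentroid_le {ι : Type*} [Fintype ι] {n : ℕ}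
    (θ : Fin n → Fin n → ℝ) (A : ι → Fin n → Fin n → ℝ) (hA : ∀ t, IsBinary (A t)) (s s' : ι) :
    (∑ t, dTheta θ (A s) (A t) ≤ ∑ t, dTheta θ (A s') (A t)) ↔
      dsqTheta θ (A s) (sampleCentroid A) ≤ dsqTheta θ (A s') (sampleCentroid A) := by
  have hcard : (0 : ℝ) < Fintype.card ι := by
    exact_mod_cast Fintype.card_pos_iff.mpr ⟨s⟩
  simp only [dTheta_eq_dsqTheta_of_isBinary θ (hA _) (hA _)]
  rw [sum_dsqTheta_eq_card_mul_dsqTheta_sampleCentroid_add θ (A s),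
    sum_dsqTheta_eq_card_mul_dsqTheta_sampleCentroid_add θ (A s'), add_le_add_iff_right,
    mul_le_mul_iff_right₀ hcard]

theorem algorithm_one_correct_general {n : ℕ} (T : ℕ)
    (θ : Fin n → Fin n → ℝ) (A : Fin T → Fin n → Fin n → ℝ)
    (hA : ∀ t, IsBinary (A t)) :
    ∀ s s' : Fin T,
      ((∑ t : Fin T, dTheta θ (A s) (A t)) ≤ ∑ t : Fin T, dTheta θ (A s') (A t)) ↔
        dsqTheta θ (A s) ((1 / (T : ℝ)) • ∑ u : Fin T, A u) ≤
          dsqTheta θ (A s') ((1 / (T : ℝ)) • ∑ u : Fin T, A u) := by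
  intro s s'
  simpa only [sampleCentroid, Fintype.card_fin] using
    sum_dTheta_le_iff_dsqTheta_sampleCentroid_le θ A hA s s'

/-- Correctness of Algorithm 1: comparing sums of d_θ distances to the sample is equivalent
to comparing dsq_θ distances to the sample centroid; hence a sample map is a medoid iff it
minimizes the dsq_θ distance to the centroid. -/
theorem algorithm_one_correct {n : ℕ} (T : ℕ) (hT : 1 ≤ T)
    (θ : Fin n → Fin n → ℝ) (A : Fin T → Fin n → Fin n → ℝ)
    (hA : ∀ t, IsBinary (A t)) :
    ∀ s s' : Fin T,
      ((∑ t : Fin T, dTheta θ (A s) (A t)) ≤ ∑ t : Fin T, dTheta θ (A s') (A t)) ↔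
        dsqTheta θ (A s) ((1 / (T : ℝ)) • ∑ u : Fin T, A u) ≤
          dsqTheta θ (A s') ((1 / (T : ℝ)) • ∑ u : Fin T, A u) :=
  algorithm_one_correct_general T θ A hA
end

section
/- (Population decomposition of the medoid cost.) Let θ : Fin n → Fin n → ℝ be any weight function, let 𝓜 : Finset (Fin n → Fin n → ℝ) be a finite set of binary matrices, let p : (Fin n → Fin n → ℝ) → ℝ satisfy p M ≥ 0 for all M ∈ 𝓜 and ∑_{M ∈ 𝓜} p M = 1, and let A_pop = ∑_{M ∈ 𝓜} p M • M. Then for every binary matrix A', ∑_{M ∈ 𝓜} p M * d_θ(M, A') = ∑_{M ∈ 𝓜} p M * dsq_θ(M, A_pop) + dsq_θ(A_pop, A'). In particular the population medoid cost of A' is, up to an additive constant independent of A', equal to dsq_θ(A_pop, A'). -/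
open Finset

/-!
On binary matrices `|a - b| = (a - b)²` entrywise, so `d_θ = dsq_θ` and the left-hand side is
the `p`-weighted mean of `dsq_θ(M, A')`. Entrywise this is the bias–variance identity
`∑ p (x - y)² = ∑ p (x - m)² + (m - y)²` with `m = ∑ p x`, valid for any weights summing to `1`
because the centred deviations `∑ p (x - m)` vanish.
-/

theorem abs_sub_eq_sub_sq_of_mem_zero_one {x y : ℝ} (hx : x ∈ ({0, 1} : Set ℝ))
    (hy : y ∈ ({0, 1} : Set ℝ)) : |x - y| = (x - y) ^ 2 := by
  rcases hx with rfl | rfl <;> rcases hy with rfl | rfl <;> norm_num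

theorem dTheta_eq_dsqTheta_of_isBinary_s12 {n : ℕ} (θ : Fin n → Fin n → ℝ)
    {A B : Fin n → Fin n → ℝ} (hA : IsBinary A) (hB : IsBinary B) :
    dTheta θ A B = dsqTheta θ A B := by
  simp only [dTheta, dsqTheta, abs_sub_eq_sub_sq_of_mem_zero_one (hA _ _) (hB _ _)]

theorem Finset.sum_mul_sub_sq_eq_add {α : Type*} (s : Finset α) {p : α → ℝ}
    (hp : ∑ a ∈ s, p a = 1) (x : α → ℝ) (y : ℝ) :
    ∑ a ∈ s, p a * (x a - y) ^ 2 =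
      ∑ a ∈ s, p a * (x a - ∑ b ∈ s, p b * x b) ^ 2 + ((∑ b ∈ s, p b * x b) - y) ^ 2 := by
  set m := ∑ b ∈ s, p b * x b
  have hcentre : ∑ a ∈ s, p a * (x a - m) = 0 := by
    simp only [mul_sub, sum_sub_distrib, ← sum_mul, hp, one_mul, sub_self, m]
  calc ∑ a ∈ s, p a * (x a - y) ^ 2
      = ∑ a ∈ s, (p a * (x a - m) ^ 2 + 2 * (m - y) * (p a * (x a - m)) + (m - y) ^ 2 * p a) :=
        sum_congr rfl fun _ _ => by ring
    _ = ∑ a ∈ s, p a * (x a - m) ^ 2 + (m - y) ^ 2 := by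
        rw [sum_add_distrib, sum_add_distrib, ← mul_sum, ← mul_sum, hcentre, hp]
        ring

section WeightedMean

variable {n : ℕ} (θ : Fin n → Fin n → ℝ) (S : Finset (Fin n → Fin n → ℝ))
  (p : (Fin n → Fin n → ℝ) → ℝ)

theorem sum_mul_dsqTheta (B : Fin n → Fin n → ℝ) :
    ∑ M ∈ S, p M * dsqTheta θ M B =
      1 / 2 * ∑ i, ∑ j, θ i j * ∑ M ∈ S, p M * (M i j - B i j) ^ 2 := by
  simp only [dsqTheta, mul_sum]
  rw [sum_comm]
  refine sum_congr rfl fun i _ => ?_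
  rw [sum_comm]
  exact sum_congr rfl fun j _ => sum_congr rfl fun M _ => by ring

theorem sum_mul_dsqTheta_eq_add (hp : ∑ M ∈ S, p M = 1) (B : Fin n → Fin n → ℝ) :
    ∑ M ∈ S, p M * dsqTheta θ M B =
      ∑ M ∈ S, p M * dsqTheta θ M (∑ M ∈ S, p M • M) + dsqTheta θ (∑ M ∈ S, p M • M) B := by
  rw [sum_mul_dsqTheta, sum_mul_dsqTheta, dsqTheta, ← mul_add, ← sum_add_distrib]
  refine congrArg _ (sum_congr rfl fun i _ => ?_)
  rw [← sum_add_distrib]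
  refine sum_congr rfl fun j _ => ?_
  simp only [Finset.sum_apply, Pi.smul_apply, smul_eq_mul]
  rw [← mul_add, S.sum_mul_sub_sq_eq_add hp]

end WeightedMean

theorem population_medoid_decomposition_general {n : ℕ} (θ : Fin n → Fin n → ℝ)
    (𝓜 : Finset (Fin n → Fin n → ℝ)) (hbin : ∀ M ∈ 𝓜, IsBinary M)
    (p : (Fin n → Fin n → ℝ) → ℝ)
    (hsum : ∑ M ∈ 𝓜, p M = 1) (A' : Fin n → Fin n → ℝ) (hA' : IsBinary A') :
    ∑ M ∈ 𝓜, p M * dTheta θ M A' =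
      (∑ M ∈ 𝓜, p M * dsqTheta θ M (∑ M ∈ 𝓜, p M • M)) +
        dsqTheta θ (∑ M ∈ 𝓜, p M • M) A' := by
  rw [← sum_mul_dsqTheta_eq_add θ 𝓜 p hsum A']
  exact sum_congr rfl fun M hM => by rw [dTheta_eq_dsqTheta_of_isBinary_s12 θ (hbin M hM) hA']

/-- Population decomposition of the medoid cost: the expected d_θ distance from a binary
matrix A' decomposes through the population centroid `A_pop = ∑ p M • M`. -/
theorem population_medoid_decomposition {n : ℕ} (θ : Fin n → Fin n → ℝ)
    (𝓜 : Finset (Fin n → Fin n → ℝ)) (hbin : ∀ M ∈ 𝓜, IsBinary M)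
    (p : (Fin n → Fin n → ℝ) → ℝ) (hp : ∀ M ∈ 𝓜, 0 ≤ p M)
    (hsum : ∑ M ∈ 𝓜, p M = 1) (A' : Fin n → Fin n → ℝ) (hA' : IsBinary A') :
    ∑ M ∈ 𝓜, p M * dTheta θ M A' =
      (∑ M ∈ 𝓜, p M * dsqTheta θ M (∑ M ∈ 𝓜, p M • M)) +
        dsqTheta θ (∑ M ∈ 𝓜, p M • M) A' :=
  population_medoid_decomposition_general θ 𝓜 hbin p hsum A' hA'
end
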